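/- Let (m_i)_{i ∈ I} be a basis of the k-vector space M and (a_{ij})_{i,j ∈ I} a family of scalars in k. Then the k-linear map R : M ⊗ M → M ⊗ M determined by R(m_i ⊗ m_j) = a_{ij} m_i ⊗ m_j for all i, j ∈ I is a solution of the Long equation. In particular the identity of M ⊗ M is a solution of the Long equation. -/

import Mathlib

open TensorProduct

noncomputable section

variable {k M : Type*} [Field k] [AddCommGroup M] [Module k M]

/-- The flip map τ : M ⊗ M → M ⊗ M, τ(m ⊗ n) = n ⊗ m. -/
def tau (k M : Type*) [Field k] [AddCommGroup M] [Module k M] :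
    M ⊗[k] M →ₗ[k] M ⊗[k] M := (TensorProduct.comm k M M).toLinearMap

/-- R¹² = R ⊗ id on M ⊗ (M ⊗ M) (transported along the associator). -/
def R12 (R : M ⊗[k] M →ₗ[k] M ⊗[k] M) :
    M ⊗[k] (M ⊗[k] M) →ₗ[k] M ⊗[k] (M ⊗[k] M) :=
  (TensorProduct.assoc k M M M).toLinearMap ∘ₗ
    TensorProduct.map R LinearMap.id ∘ₗ (TensorProduct.assoc k M M M).symm.toLinearMap

/-- R²³ = id ⊗ R on M ⊗ (M ⊗ M). -/
def R23 (R : M ⊗[k] M →ₗ[k] M ⊗[k] M) :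
    M ⊗[k] (M ⊗[k] M) →ₗ[k] M ⊗[k] (M ⊗[k] M) :=
  TensorProduct.map LinearMap.id R

/-- R¹³ = (id ⊗ τ)(R ⊗ id)(id ⊗ τ) on M ⊗ (M ⊗ M). -/
def R13 (R : M ⊗[k] M →ₗ[k] M ⊗[k] M) :
    M ⊗[k] (M ⊗[k] M) →ₗ[k] M ⊗[k] (M ⊗[k] M) :=
  TensorProduct.map LinearMap.id (tau k M) ∘ₗ R12 R ∘ₗ
    TensorProduct.map LinearMap.id (tau k M)

/-- R is a solution of the Long equation: R¹²R¹³ = R¹³R¹² and R¹²R²³ = R²³R¹². -/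
def IsLongSolution (R : M ⊗[k] M →ₗ[k] M ⊗[k] M) : Prop :=
  R12 R ∘ₗ R13 R = R13 R ∘ₗ R12 R ∧ R12 R ∘ₗ R23 R = R23 R ∘ₗ R12 R

end

/-! In the basis `m i ⊗ m j ⊗ m l` of `M ⊗ M ⊗ M`, the maps `R¹²`, `R¹³`, `R²³` are diagonal with
eigenvalues `a i j`, `a i l`, `a j l`, and maps diagonal in a common basis commute. -/

theorem Module.Basis.comp_comm_of_apply_eq_smul {R N ι : Type*} [CommSemiring R]
    [AddCommMonoid N] [Module R N] (b : Module.Basis ι R N) {f g : N →ₗ[R] N} {α β : ι → R}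
    (hf : ∀ i, f (b i) = α i • b i) (hg : ∀ i, g (b i) = β i • b i) :
    f ∘ₗ g = g ∘ₗ f :=
  b.ext fun i => by simp only [LinearMap.comp_apply, hf, hg, map_smul, smul_smul, mul_comm]

section

variable {k M : Type*} [Field k] [AddCommGroup M] [Module k M]
  {R : M ⊗[k] M →ₗ[k] M ⊗[k] M} {x y z : M} {c : k}

theorem R12_tmul_tmul_of_eq_smul (hR : R (x ⊗ₜ y) = c • (x ⊗ₜ y)) :
    R12 R (x ⊗ₜ (y ⊗ₜ z)) = c • (x ⊗ₜ (y ⊗ₜ z)) := by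
  simp [R12, hR, smul_tmul']

theorem R13_tmul_tmul_of_eq_smul (hR : R (x ⊗ₜ z) = c • (x ⊗ₜ z)) :
    R13 R (x ⊗ₜ (y ⊗ₜ z)) = c • (x ⊗ₜ (y ⊗ₜ z)) := by
  simp [R13, tau, R12_tmul_tmul_of_eq_smul hR]

theorem R23_tmul_tmul_of_eq_smul (hR : R (y ⊗ₜ z) = c • (y ⊗ₜ z)) :
    R23 R (x ⊗ₜ (y ⊗ₜ z)) = c • (x ⊗ₜ (y ⊗ₜ z)) := by
  simp [R23, hR]

theorem isLongSolution_of_basis_eigenvectors {I : Type*} (m : Module.Basis I k M)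
    (a : I → I → k) (R : M ⊗[k] M →ₗ[k] M ⊗[k] M)
    (hR : ∀ i j, R (m i ⊗ₜ[k] m j) = a i j • (m i ⊗ₜ[k] m j)) :
    IsLongSolution R := by
  let b := m.tensorProduct (m.tensorProduct m)
  have h12 : ∀ t : I × I × I, R12 R (b t) = a t.1 t.2.1 • b t := fun ⟨i, j, l⟩ => by
    simpa [b] using R12_tmul_tmul_of_eq_smul (z := m l) (hR i j)
  have h13 : ∀ t : I × I × I, R13 R (b t) = a t.1 t.2.2 • b t := fun ⟨i, j, l⟩ => by
    simpa [b] using R13_tmul_tmul_of_eq_smul (y := m j) (hR i l)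
  have h23 : ∀ t : I × I × I, R23 R (b t) = a t.2.1 t.2.2 • b t := fun ⟨i, j, l⟩ => by
    simpa [b] using R23_tmul_tmul_of_eq_smul (x := m i) (hR j l)
  exact ⟨b.comp_comm_of_apply_eq_smul h12 h13, b.comp_comm_of_apply_eq_smul h12 h23⟩

end

theorem long_equation_diagonal
    {k M : Type*} [Field k] [AddCommGroup M] [Module k M]
    {I : Type*} (m : Module.Basis I k M) (a : I → I → k)
    (R : M ⊗[k] M →ₗ[k] M ⊗[k] M)
    (hR : ∀ i j, R (m i ⊗ₜ[k] m j) = a i j • (m i ⊗ₜ[k] m j)) :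
    IsLongSolution R ∧
      IsLongSolution (LinearMap.id : M ⊗[k] M →ₗ[k] M ⊗[k] M) := by
  refine ⟨isLongSolution_of_basis_eigenvectors m a R hR,
    isLongSolution_of_basis_eigenvectors m (fun _ _ => 1) _ fun _ _ => ?_⟩
  rw [one_smul, LinearMap.id_apply]
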